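/- arXiv:0903.1033 — 9 statements merged into one kernel-verified Lean document; each statement's English description precedes it below -/
import Mathlib

section
/- Let K be a finite field of characteristic p viewed as a vector space over a subfield F = F_{p^a}, let f : K → K be a nonzero F-linear map with f² = 0, and let χ : K → F be a nonzero additive map with χ∘f = 0. Define α(x) = 1 + χ(x)·f (an F-linear automorphism of K). Then α satisfies the cocycle condition α(x+y) = α(α(y)(x))·α(y) for all x, y ∈ K; in particular I_{χ,f} = {(x, 1 - χ(x)f) : x ∈ K} is a subgroup of I ⋊ GL(K_F) acting transitively on K. -/
/-!
Since `f² = 0`, `α(x) = 1 + χ(x) • f` turns addition into composition, `α(x + y) = α(x) α(y)`,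
and since `χ ∘ f = 0`, `χ (α(y) x) = χ x`, so `α(α(y) x) = α(x)`: together these give the
cocycle identity. The same two facts show that the affine maps `τ_x : z ↦ x + α(-x) z` compose as
`τ_x τ_y = τ_{x + α(-x) y}`, so they form a group, and `τ_x z = w` is solved by
`x = (w - z) + χ(w - z) • f z`.
-/

namespace Module.End

variable {R M : Type*} [CommRing R] [AddCommGroup M] [Module R M]
  {f : M →ₗ[R] M} {χ : M →+ R}

variable (f χ) in
def twist (x : M) : Module.End R M := 1 + χ x • f

@[simp]
lemma twist_apply (x z : M) : twist f χ x z = z + χ x • f z := rfl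

lemma twist_zero : twist f χ 0 = 1 := by
  ext z
  simp

lemma twist_add (hf2 : f ∘ₗ f = 0) (x y : M) :
    twist f χ (x + y) = twist f χ x * twist f χ y := by
  ext z
  have hff : f (f z) = 0 := LinearMap.congr_fun hf2 z
  simp only [twist_apply, Module.End.mul_apply, map_add, map_smul, hff, smul_zero, add_zero,
    add_smul]
  abel

lemma twist_mul_twist_neg (hf2 : f ∘ₗ f = 0) (x : M) :
    twist f χ x * twist f χ (-x) = 1 := by
  rw [← twist_add hf2, add_neg_cancel, twist_zero]

lemma twist_neg_mul_twist (hf2 : f ∘ₗ f = 0) (x : M) :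
    twist f χ (-x) * twist f χ x = 1 := by
  rw [← twist_add hf2, neg_add_cancel, twist_zero]

lemma twist_congr {x y : M} (h : χ x = χ y) : twist f χ x = twist f χ y := by
  simp only [twist, h]

lemma map_twist_apply (hχf : ∀ x, χ (f x) = 0) (x y : M) : χ (twist f χ y x) = χ x := by
  rw [twist_apply, map_add, ← f.map_smul, hχf, add_zero]

theorem twist_cocycle (hf2 : f ∘ₗ f = 0) (hχf : ∀ x, χ (f x) = 0) (x y : M) :
    twist f χ (x + y) = twist f χ (twist f χ y x) * twist f χ y := by
  rw [twist_add hf2, twist_congr (map_twist_apply hχf x y)]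

variable (χ) in
def affinePerm (hf2 : f ∘ₗ f = 0) (x : M) : Equiv.Perm M where
  toFun z := x + twist f χ (-x) z
  invFun z := twist f χ x (z - x)
  left_inv z := by
    simp only [add_sub_cancel_left, ← Module.End.mul_apply, twist_mul_twist_neg hf2,
      Module.End.one_apply]
  right_inv z := by
    simp only [← Module.End.mul_apply, twist_neg_mul_twist hf2, Module.End.one_apply,
      add_sub_cancel]

variable (hf2 : f ∘ₗ f = 0) (hχf : ∀ x, χ (f x) = 0)

lemma affinePerm_apply (x z : M) : affinePerm χ hf2 x z = x + twist f χ (-x) z := rfl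

lemma coe_affinePerm (x : M) :
    ⇑(affinePerm χ hf2 x) = fun z => x + (z - χ x • f z) := by
  funext z
  simp [affinePerm_apply, sub_eq_add_neg]

lemma affinePerm_zero : affinePerm χ hf2 0 = 1 := by
  ext z
  simp [affinePerm_apply]

include hχf in
lemma affinePerm_mul (x y : M) :
    affinePerm χ hf2 x * affinePerm χ hf2 y = affinePerm χ hf2 (x + twist f χ (-x) y) := by
  have hprod : twist f χ (-(x + twist f χ (-x) y)) = twist f χ (-x) * twist f χ (-y) := by
    rw [neg_add, twist_add hf2]
    congr 1
    exact twist_congr (by rw [map_neg, map_neg, map_twist_apply hχf])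
  ext z
  simp only [Equiv.Perm.mul_apply, affinePerm_apply, hprod, map_add, Module.End.mul_apply,
    add_assoc]

include hχf in
lemma affinePerm_inv (x : M) : (affinePerm χ hf2 x)⁻¹ = affinePerm χ hf2 (-twist f χ x x) := by
  refine inv_eq_of_mul_eq_one_right ?_
  rw [affinePerm_mul hf2 hχf, map_neg, ← Module.End.mul_apply, twist_neg_mul_twist hf2,
    Module.End.one_apply, add_neg_cancel, affinePerm_zero]

include hχf in
lemma affinePerm_apply_eq (z w : M) :
    affinePerm χ hf2 (w - z + χ (w - z) • f z) z = w := by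
  have hχx : χ (w - z + χ (w - z) • f z) = χ (w - z) := by
    rw [map_add, ← f.map_smul, hχf, add_zero]
  rw [affinePerm_apply, twist_apply, map_neg, hχx]
  simp only [neg_smul]
  abel

variable (χ) in
def affineSubgroup : Subgroup (Equiv.Perm M) where
  carrier := Set.range (affinePerm χ hf2)
  mul_mem' := by
    rintro _ _ ⟨x, rfl⟩ ⟨y, rfl⟩
    exact ⟨_, (affinePerm_mul hf2 hχf x y).symm⟩
  one_mem' := ⟨0, affinePerm_zero hf2⟩
  inv_mem' := by
    rintro _ ⟨x, rfl⟩
    exact ⟨_, (affinePerm_inv hf2 hχf x).symm⟩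

end Module.End

open Module.End in
theorem stmt5_general
    (F K : Type*) [Field F] [Field K] [Algebra F K]
    (f : K →ₗ[F] K) (hf2 : f ∘ₗ f = 0)
    (χ : K →+ F) (hχf : ∀ x : K, χ (f x) = 0) :
    (∀ x y : K, (fun z : K => z + χ (x + y) • f z)
        = (fun z : K => z + χ (x + χ y • f x) • f z) ∘ (fun z : K => z + χ y • f z)) ∧
    ∃ S : Subgroup (Equiv.Perm K),
      (S : Set (Equiv.Perm K)) = {σ : Equiv.Perm K | ∃ x : K, (σ : K → K) = fun z : K => x + (z - χ x • f z)} ∧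
      ∀ z w : K, ∃ σ ∈ S, σ z = w := by
  refine ⟨fun x y => congrArg DFunLike.coe (twist_cocycle hf2 hχf x y),
    affineSubgroup χ hf2 hχf, ?_, fun z w => ⟨_, ⟨_, rfl⟩, affinePerm_apply_eq hf2 hχf z w⟩⟩
  ext σ
  refine exists_congr fun x => ?_
  rw [← coe_affinePerm hf2, DFunLike.coe_fn_eq, eq_comm]

/-- With `f : K → K` a nonzero `F`-linear map with `f² = 0` and
`χ : K → F` a nonzero additive map with `χ ∘ f = 0`, the map `α(x) = 1 + χ(x)·f`
satisfies the cocycle condition `α(x+y) = α(α(y)(x)) ∘ α(y)`, and consequently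
`I_{χ,f} = {(x, 1 - χ(x)f) : x ∈ K}`, realized inside `Perm K` as the set of
permutations `z ↦ x + z - χ(x)·f(z)`, is a subgroup of `I ⋊ GL(K_F)` acting
transitively on `K`. -/
theorem stmt5 (p m a : ℕ) (hp : p.Prime) (ham : a ∣ m)
    (F K : Type*) [Field F] [Field K] [Algebra F K] [Fintype F] [Fintype K]
    (hF : Fintype.card F = p ^ a) (hK : Fintype.card K = p ^ m)
    (f : K →ₗ[F] K) (hf : f ≠ 0) (hf2 : f ∘ₗ f = 0)
    (χ : K →+ F) (hχ : χ ≠ 0) (hχf : ∀ x : K, χ (f x) = 0) :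
    (∀ x y : K, (fun z : K => z + χ (x + y) • f z)
        = (fun z : K => z + χ (x + χ y • f x) • f z) ∘ (fun z : K => z + χ y • f z)) ∧
    ∃ S : Subgroup (Equiv.Perm K),
      (S : Set (Equiv.Perm K)) = {σ : Equiv.Perm K | ∃ x : K, (σ : K → K) = fun z : K => x + (z - χ x • f z)} ∧
      ∀ z w : K, ∃ σ ∈ S, σ z = w :=
  stmt5_general F K f hf2 χ hχf
end

section
/- With χ and f as in the construction (f : K → K nonzero F_{p^a}-linear with f² = 0, χ : K → F_{p^a} nonzero additive with χ∘f = 0), the group I_{χ,f} = {(x, 1 - χ(x)f) : x ∈ K} (inside I ⋊ GL(K_{F_{p^a}})) is abelian if and only if χ is F_{p^a}-linear and ker(χ) ⊆ ker(f). Moreover, in that case ker(χ) = ker(f). -/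
/-!
Since `f ∘ f = 0`, the composite of `z ↦ x + z - χ(x) f(z)` and `z ↦ y + z - χ(y) f(z)` is
`z ↦ (x + y - χ(x) f(y)) + z - (χ(x) + χ(y)) f(z)`, so the group is abelian exactly when
`χ(x) f(y) = χ(y) f(x)` for all `x, y`. Testing this identity against a `y` with `f(y) ≠ 0`
forces `χ` to be `F`-linear and `ker f ⊆ ker χ`; testing it against an `x` with `χ(x) ≠ 0` gives
`ker χ ⊆ ker f`. Conversely, if `χ` is linear with `ker χ ⊆ ker f`, then `χ(y) x - χ(x) y` lies in
`ker χ`, hence in `ker f`, which is the identity.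
-/

section

variable {F V : Type*} [Field F] [AddCommGroup V] [Module F V] (χ : V →+ F) (f : V →ₗ[F] V)

/-- The permutation of `V` realizing the element `(x, 1 - χ(x) f)` of `I_{χ,f}`. -/
def affineShear (x : V) : V → V := fun z => x + (z - χ x • f z)

lemma affineShear_apply_affineShear (hf2 : f ∘ₗ f = 0) (x y z : V) :
    affineShear χ f x (affineShear χ f y z) =
      x + y - χ x • f y + (z - (χ x + χ y) • f z) := by
  have hffz : f (f z) = 0 := LinearMap.congr_fun hf2 z
  simp only [affineShear, map_add, map_sub, map_smul, hffz, smul_zero, sub_zero, smul_add,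
    add_smul]
  abel

lemma affineShear_comm_iff (hf2 : f ∘ₗ f = 0) :
    (∀ x y : V, affineShear χ f x ∘ affineShear χ f y = affineShear χ f y ∘ affineShear χ f x) ↔
      ∀ x y : V, χ x • f y = χ y • f x := by
  refine forall₂_congr fun x y => ?_
  simp only [funext_iff, Function.comp_apply, affineShear_apply_affineShear χ f hf2,
    add_comm (χ y) (χ x), add_left_inj, forall_const, add_comm y x, sub_right_inj]

variable {χ f}

lemma map_smul_of_smul_apply_comm (hf : f ≠ 0) (h : ∀ x y : V, χ x • f y = χ y • f x)
    (c : F) (x : V) : χ (c • x) = c * χ x := by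
  obtain ⟨y, hy⟩ := DFunLike.ne_iff.mp hf
  refine smul_left_injective F hy ?_
  calc χ (c • x) • f y = χ y • f (c • x) := h _ y
    _ = (c * χ x) • f y := by rw [map_smul, smul_comm, ← h x y, smul_smul]

lemma apply_eq_zero_of_smul_apply_comm (hχ : χ ≠ 0) (h : ∀ x y : V, χ x • f y = χ y • f x)
    {x : V} (hx : χ x = 0) : f x = 0 := by
  obtain ⟨x₀, hx₀⟩ := DFunLike.ne_iff.mp hχ
  have h' := h x₀ x
  rw [hx, zero_smul] at h'
  exact (smul_eq_zero.mp h').resolve_left hx₀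

lemma eq_zero_of_smul_apply_comm (hf : f ≠ 0) (h : ∀ x y : V, χ x • f y = χ y • f x)
    {x : V} (hx : f x = 0) : χ x = 0 := by
  obtain ⟨y, hy⟩ := DFunLike.ne_iff.mp hf
  have h' := h x y
  rw [hx, smul_zero] at h'
  exact (smul_eq_zero.mp h').resolve_right hy

lemma smul_apply_comm_of_map_smul (hlin : ∀ (c : F) (x : V), χ (c • x) = c * χ x)
    (hker : ∀ x : V, χ x = 0 → f x = 0) (x y : V) : χ x • f y = χ y • f x := by
  have hχ : χ (χ y • x - χ x • y) = 0 := by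
    rw [map_sub, hlin, hlin, mul_comm, sub_self]
  have hf := hker _ hχ
  rw [map_sub, map_smul, map_smul, sub_eq_zero] at hf
  exact hf.symm

lemma smul_apply_comm_iff (hf : f ≠ 0) (hχ : χ ≠ 0) :
    (∀ x y : V, χ x • f y = χ y • f x) ↔
      (∀ (c : F) (x : V), χ (c • x) = c * χ x) ∧ ∀ x : V, χ x = 0 → f x = 0 :=
  ⟨fun h => ⟨map_smul_of_smul_apply_comm hf h, fun _ => apply_eq_zero_of_smul_apply_comm hχ h⟩,
    fun h => smul_apply_comm_of_map_smul h.1 h.2⟩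

end

theorem stmt6_general
    (F K : Type*) [Field F] [Field K] [Algebra F K]
    (f : K →ₗ[F] K) (hf : f ≠ 0) (hf2 : f ∘ₗ f = 0)
    (χ : K →+ F) (hχ : χ ≠ 0) :
    ((∀ x y : K,
        (fun z : K => x + (z - χ x • f z)) ∘ (fun z : K => y + (z - χ y • f z)) =
          (fun z : K => y + (z - χ y • f z)) ∘ (fun z : K => x + (z - χ x • f z))) ↔
      ((∀ (c : F) (x : K), χ (c • x) = c * χ x) ∧ ∀ x : K, χ x = 0 → f x = 0)) ∧
    (((∀ (c : F) (x : K), χ (c • x) = c * χ x) ∧ ∀ x : K, χ x = 0 → f x = 0) →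
      ∀ x : K, χ x = 0 ↔ f x = 0) := by
  refine ⟨(affineShear_comm_iff χ f hf2).trans (smul_apply_comm_iff hf hχ), fun h x => ?_⟩
  exact ⟨h.2 x, eq_zero_of_smul_apply_comm hf ((smul_apply_comm_iff hf hχ).mpr h)⟩

/-- The group `I_{χ,f} = {(x, 1 - χ(x)f) : x ∈ K}`, whose elements are
realized as the permutations `z ↦ x + z - χ(x)·f(z)` of `K`, is abelian if and only if
`χ` is `F`-linear and `ker χ ⊆ ker f`; moreover, in that case `ker χ = ker f`. -/
theorem stmt6 (p m a : ℕ) (hp : p.Prime) (ham : a ∣ m)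
    (F K : Type*) [Field F] [Field K] [Algebra F K] [Fintype F] [Fintype K]
    (hF : Fintype.card F = p ^ a) (hK : Fintype.card K = p ^ m)
    (f : K →ₗ[F] K) (hf : f ≠ 0) (hf2 : f ∘ₗ f = 0)
    (χ : K →+ F) (hχ : χ ≠ 0) (hχf : ∀ x : K, χ (f x) = 0) :
    ((∀ x y : K,
        (fun z : K => x + (z - χ x • f z)) ∘ (fun z : K => y + (z - χ y • f z)) =
          (fun z : K => y + (z - χ y • f z)) ∘ (fun z : K => x + (z - χ x • f z))) ↔
      ((∀ (c : F) (x : K), χ (c • x) = c * χ x) ∧ ∀ x : K, χ x = 0 → f x = 0)) ∧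
    (((∀ (c : F) (x : K), χ (c • x) = c * χ x) ∧ ∀ x : K, χ x = 0 → f x = 0) →
      ∀ x : K, χ x = 0 ↔ f x = 0) :=
  stmt6_general F K f hf hf2 χ hχ
end

section
/- With χ and f as in the construction, two elements (x, 1-χ(x)f) and (y, 1-χ(y)f) of I_{χ,f} commute if and only if χ(x)·f(y) = χ(y)·f(x). -/
/-! The commutator of the two affine maps is a translation: expanding both composites, every
term except `-χ(x)•f(y)` and `-χ(y)•f(x)` is symmetric in the two maps (the quadratic term is
`χ(x)χ(y)•f(f z)` in both), so they commute exactly when these two translations agree. -/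

section Shear

variable {R M : Type*} [CommRing R] [AddCommGroup M] [Module R M]

/-- The element `(x, 1 - c•f)` of the semidirect product, acting on `M`. -/
def shearMap (f : M →ₗ[R] M) (c : R) (x : M) : M → M := fun z => x + (z - c • f z)

theorem shearMap_comp_sub_comp_apply (f : M →ₗ[R] M) (c d : R) (x y z : M) :
    shearMap f c x (shearMap f d y z) - shearMap f d y (shearMap f c x z) =
      d • f x - c • f y := by
  simp only [shearMap, map_add, map_sub, map_smul, smul_add, smul_sub, smul_comm c d]
  abel

theorem shearMap_comp_comm_iff (f : M →ₗ[R] M) (c d : R) (x y : M) :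
    shearMap f c x ∘ shearMap f d y = shearMap f d y ∘ shearMap f c x ↔
      c • f y = d • f x := by
  have hcomm : ∀ z, shearMap f c x (shearMap f d y z) = shearMap f d y (shearMap f c x z) ↔
      c • f y = d • f x := fun z => by
    rw [← sub_eq_zero, shearMap_comp_sub_comp_apply, sub_eq_zero, eq_comm]
  exact ⟨fun h => (hcomm 0).1 (congrFun h 0), fun h => funext fun z => (hcomm z).2 h⟩

end Shear

theorem stmt7_general
    (F K : Type*) [Field F] [Field K] [Algebra F K]
    (f : K →ₗ[F] K)
    (χ : K →+ F) (x y : K) :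
    (fun z : K => x + (z - χ x • f z)) ∘ (fun z : K => y + (z - χ y • f z)) =
        (fun z : K => y + (z - χ y • f z)) ∘ (fun z : K => x + (z - χ x • f z)) ↔
      χ x • f y = χ y • f x :=
  shearMap_comp_comm_iff f (χ x) (χ y) x y

/-- Two elements `(x, 1-χ(x)f)` and `(y, 1-χ(y)f)` of `I_{χ,f}`, realized as
the permutations `z ↦ x + z - χ(x)·f(z)` and `z ↦ y + z - χ(y)·f(z)` of `K`, commute if
and only if `χ(x)·f(y) = χ(y)·f(x)`. -/
theorem stmt7 (p m a : ℕ) (hp : p.Prime) (ham : a ∣ m)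
    (F K : Type*) [Field F] [Field K] [Algebra F K] [Fintype F] [Fintype K]
    (hF : Fintype.card F = p ^ a) (hK : Fintype.card K = p ^ m)
    (f : K →ₗ[F] K) (hf : f ≠ 0) (hf2 : f ∘ₗ f = 0)
    (χ : K →+ F) (hχ : χ ≠ 0) (hχf : ∀ x : K, χ (f x) = 0) (x y : K) :
    (fun z : K => x + (z - χ x • f z)) ∘ (fun z : K => y + (z - χ y • f z)) =
        (fun z : K => y + (z - χ y • f z)) ∘ (fun z : K => x + (z - χ x • f z)) ↔
      χ x • f y = χ y • f x :=
  stmt7_general F K f χ x y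
end

section
/- With χ and f as in the construction: if p is odd then every element of I_{χ,f} satisfies g^p = 1 (the group has exponent p); if p = 2 then every element satisfies g⁴ = 1 and some element has order 4 (the exponent is exactly 4). -/
/-!
The element determined by `x` is `T z = x + (z - φ z)` with `φ = χ(x) • f`, and `φ ∘ φ = 0`.
Since `φ` kills the `φ`-terms, iterating gives the closed form
`Tⁿ z = n • x + z - n • φ z - (n choose 2) • φ x`. In characteristic `p` this is the identity
as soon as `p ∣ n` and `p ∣ n choose 2`: for odd `p` take `n = p`, for `p = 2` take `n = 4`.
For `p = 2`, `T² 0 = -φ x`, which is nonzero for `x` outside the union of the proper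
subgroups `ker χ` and `ker f`.
-/

section Iterate

variable {M : Type*} [AddCommGroup M] (φ : M →+ M) (x : M)

theorem iterate_add_sub_apply_of_comp_self_eq_zero (hφ : ∀ z, φ (φ z) = 0) (n : ℕ) (z : M) :
    (fun z => x + (z - φ z))^[n] z = n • x + z - n • φ z - n.choose 2 • φ x := by
  induction n with
  | zero => simp
  | succ n ih =>
    rw [Function.iterate_succ_apply', ih]
    simp only [map_sub, map_add, map_nsmul, hφ, nsmul_zero, sub_zero]
    rw [Nat.choose_succ_succ, Nat.choose_one_right, succ_nsmul, succ_nsmul, add_nsmul]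
    abel

theorem iterate_add_sub_eq_id_of_comp_self_eq_zero (hφ : ∀ z, φ (φ z) = 0) {n : ℕ}
    (hn : ∀ y : M, n • y = 0) (hn₂ : ∀ y : M, n.choose 2 • y = 0) :
    (fun z => x + (z - φ z))^[n] = id := by
  funext z
  simp [iterate_add_sub_apply_of_comp_self_eq_zero φ x hφ, hn, hn₂]

theorem iterate_two_add_sub_ne_id (h2x : 2 • x = 0) (hφx : φ x ≠ 0) :
    (fun z => x + (z - φ z))^[2] ≠ id := by
  intro h
  have h0 := congrFun h 0
  simp only [Function.iterate_succ_apply', Function.iterate_zero_apply, map_zero, sub_zero,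
    add_zero, id_eq] at h0
  rw [← add_sub_assoc, ← two_nsmul, h2x, zero_sub, neg_eq_zero] at h0
  exact hφx h0

end Iterate

theorem CharP.nsmul_eq_zero_of_dvd {R : Type*} [Ring R] (p : ℕ) [CharP R p] {n : ℕ}
    (hn : p ∣ n) (y : R) : n • y = 0 := by
  rw [nsmul_eq_mul, (CharP.cast_eq_zero_iff R p n).mpr hn, zero_mul]

theorem AddMonoidHom.exists_apply_ne_zero_and_apply_ne_zero {G A B : Type*} [AddGroup G]
    [AddGroup A] [AddGroup B] {φ : G →+ A} {ψ : G →+ B} (hφ : φ ≠ 0) (hψ : ψ ≠ 0) :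
    ∃ x, φ x ≠ 0 ∧ ψ x ≠ 0 := by
  obtain ⟨u, hu⟩ : ∃ u, φ u ≠ 0 := by
    by_contra! h
    exact hφ (AddMonoidHom.ext h)
  obtain ⟨v, hv⟩ : ∃ v, ψ v ≠ 0 := by
    by_contra! h
    exact hψ (AddMonoidHom.ext h)
  by_cases hψu : ψ u = 0
  · by_cases hφv : φ v = 0
    · exact ⟨u + v, by rwa [map_add, hφv, add_zero], by rwa [map_add, hψu, zero_add]⟩
    · exact ⟨v, hφv, hv⟩
  · exact ⟨u, hu, hψu⟩

theorem stmt9_general (p m : ℕ) (hp : p.Prime)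
    (F K : Type*) [Field F] [Field K] [Algebra F K] [Fintype K]
    (hK : Fintype.card K = p ^ m)
    (f : K →ₗ[F] K) (hf : f ≠ 0) (hf2 : f ∘ₗ f = 0)
    (χ : K →+ F) (hχ : χ ≠ 0) :
    (Odd p → ∀ x : K, (fun z : K => x + (z - χ x • f z))^[p] = id) ∧
    (p = 2 →
      (∀ x : K, (fun z : K => x + (z - χ x • f z))^[4] = id) ∧
      (∃ x : K, (fun z : K => x + (z - χ x • f z))^[2] ≠ id)) := by
  have : Fact p.Prime := ⟨hp⟩
  have : CharP K p := charP_of_card_eq_prime_pow hK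
  have hφ (x z : K) : (χ x • f) ((χ x • f) z) = 0 := by
    simp [← LinearMap.comp_apply, hf2]
  refine ⟨fun hodd x => ?_, ?_⟩
  · refine iterate_add_sub_eq_id_of_comp_self_eq_zero (χ x • f).toAddMonoidHom x (hφ x)
      (CharP.nsmul_eq_zero_of_dvd p dvd_rfl) (CharP.nsmul_eq_zero_of_dvd p ?_)
    exact hp.dvd_choose_self two_ne_zero ((hp.odd_iff.mp hodd).trans_lt' (by norm_num))
  · rintro rfl
    refine ⟨fun x => iterate_add_sub_eq_id_of_comp_self_eq_zero (χ x • f).toAddMonoidHom x (hφ x)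
      (CharP.nsmul_eq_zero_of_dvd 2 (by norm_num)) (CharP.nsmul_eq_zero_of_dvd 2 (by decide)), ?_⟩
    obtain ⟨x, hχx, hfx⟩ := χ.exists_apply_ne_zero_and_apply_ne_zero
      (ψ := f.toAddMonoidHom) hχ fun h => hf (by ext z; exact DFunLike.congr_fun h z)
    exact ⟨x, iterate_two_add_sub_ne_id (χ x • f).toAddMonoidHom x
      (CharP.nsmul_eq_zero_of_dvd 2 dvd_rfl x) (smul_ne_zero hχx hfx)⟩

/-- In the group `I_{χ,f}` (whose element determined by `x ∈ K` is the
permutation `z ↦ x + z - χ(x)·f(z)` of `K`, so that powers are iterates): if `p` is odd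
then every element satisfies `g^p = 1`; if `p = 2` then every element satisfies `g⁴ = 1`
and some element has order `4` (the exponent is exactly `4`). -/
theorem stmt9 (p m a : ℕ) (hp : p.Prime) (ham : a ∣ m)
    (F K : Type*) [Field F] [Field K] [Algebra F K] [Fintype F] [Fintype K]
    (hF : Fintype.card F = p ^ a) (hK : Fintype.card K = p ^ m)
    (f : K →ₗ[F] K) (hf : f ≠ 0) (hf2 : f ∘ₗ f = 0)
    (χ : K →+ F) (hχ : χ ≠ 0) (hχf : ∀ x : K, χ (f x) = 0) :
    (Odd p → ∀ x : K, (fun z : K => x + (z - χ x • f z))^[p] = id) ∧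
    (p = 2 →
      (∀ x : K, (fun z : K => x + (z - χ x • f z))^[4] = id) ∧
      (∃ x : K, (fun z : K => x + (z - χ x • f z))^[2] ≠ id)) :=
  stmt9_general p m hp F K hK f hf hf2 χ hχ
end

section
/- With χ and f as in the construction, for any x ∈ K the p-th power of the element v = (x, 1 - χ(x)f) in I_{χ,f} equals ((p(p-1)/2)·χ(x)·f(x), 1). In particular, if p = 2, then v² = (χ(x)f(x), 1). -/
/-!
Write `T z = x + z - g z` with `g = χ(x)·f`. Since `g² = 0`, applying `g` to
`Tⁿ z = n•x + z - C(n,2)•g x - n•g z` gives `n•g x + g z`, which yields the same formula for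
`n + 1`. When `n` kills `K` the terms `n•x` and `n•g z` vanish, and so does `2•C(n,2)•g x`,
whence `-C(n,2)•g x = C(n,2)•g x`.
-/

section NilpotentShear

variable {V : Type*} [AddCommGroup V] (g : V →+ V) (x : V)

theorem iterate_add_sub_apply_of_sq_eq_zero (hg : ∀ w, g (g w) = 0) (n : ℕ) (z : V) :
    (fun z => x + (z - g z))^[n] z = n • x + z - n.choose 2 • g x - n • g z := by
  induction n generalizing z with
  | zero => simp
  | succ n ih =>
    have hg_iterate : g (n • x + z - n.choose 2 • g x - n • g z) = n • g x + g z := by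
      simp only [map_sub, map_add, map_nsmul, hg, nsmul_zero, sub_zero]
    rw [Function.iterate_succ_apply', ih, hg_iterate, Nat.choose_succ_succ, Nat.choose_one_right]
    simp only [add_nsmul, one_nsmul]
    abel

theorem neg_choose_two_nsmul_of_nsmul_eq_zero {n : ℕ} (hn : ∀ w : V, n • w = 0) :
    -(n.choose 2 • x) = n.choose 2 • x := by
  have htwice : n.choose 2 • x + n.choose 2 • x = 0 := by
    rw [← add_nsmul, ← two_mul, Nat.choose_two_right,
      Nat.two_mul_div_two_of_even (Nat.even_mul_pred_self n), mul_comm, mul_nsmul, hn]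
  exact neg_eq_of_add_eq_zero_left htwice

theorem iterate_add_sub_of_sq_eq_zero_of_nsmul_eq_zero (hg : ∀ w, g (g w) = 0) {n : ℕ}
    (hn : ∀ w : V, n • w = 0) :
    (fun z => x + (z - g z))^[n] = fun y => (n * (n - 1) / 2) • g x + y := by
  funext z
  rw [iterate_add_sub_apply_of_sq_eq_zero g x hg, hn, hn, zero_add, sub_zero, sub_eq_add_neg,
    neg_choose_two_nsmul_of_nsmul_eq_zero (g x) hn, Nat.choose_two_right, add_comm]

end NilpotentShear

theorem FiniteField.nsmul_eq_zero_of_card_eq_pow (K : Type*) [Field K] [Fintype K] {p m : ℕ}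
    (hK : Fintype.card K = p ^ m) (w : K) : p • w = 0 := by
  have hp : (p : K) = 0 := by
    have h := FiniteField.cast_card_eq_zero K
    rw [hK, Nat.cast_pow] at h
    exact eq_zero_of_pow_eq_zero h
  rw [nsmul_eq_mul, hp, zero_mul]

theorem stmt10_general (p m : ℕ)
    (F K : Type*) [Field F] [Field K] [Algebra F K] [Fintype K]
    (hK : Fintype.card K = p ^ m)
    (f : K →ₗ[F] K) (hf2 : f ∘ₗ f = 0)
    (χ : K →+ F) :
    (∀ x : K, (fun z : K => x + (z - χ x • f z))^[p] =
        fun y : K => (p * (p - 1) / 2) • (χ x • f x) + y) ∧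
    (p = 2 → ∀ x : K, (fun z : K => x + (z - χ x • f z))^[2] =
        fun y : K => χ x • f x + y) := by
  have hg (x w : K) : (χ x • f) ((χ x • f) w) = 0 := by
    simp [← LinearMap.comp_apply (f := f), hf2]
  have hpower (x : K) : (fun z : K => x + (z - χ x • f z))^[p] =
      fun y : K => (p * (p - 1) / 2) • (χ x • f x) + y :=
    iterate_add_sub_of_sq_eq_zero_of_nsmul_eq_zero (χ x • f).toAddMonoidHom x (hg x)
      (FiniteField.nsmul_eq_zero_of_card_eq_pow K hK)
  refine ⟨hpower, ?_⟩
  rintro rfl x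
  simpa using hpower x

/-- In `I_{χ,f}`, for any `x ∈ K` the `p`-th power of the element
`v = (x, 1 - χ(x)f)` (realized as the permutation `z ↦ x + z - χ(x)·f(z)` of `K`, so
that `v^p` is the `p`-th iterate) is the translation by `(p(p-1)/2)·χ(x)·f(x)`,
i.e. the element `((p(p-1)/2)·χ(x)·f(x), 1)`. In particular, if `p = 2` then
`v² = (χ(x)f(x), 1)`. -/
theorem stmt10 (p m a : ℕ) (hp : p.Prime) (ham : a ∣ m)
    (F K : Type*) [Field F] [Field K] [Algebra F K] [Fintype F] [Fintype K]
    (hF : Fintype.card F = p ^ a) (hK : Fintype.card K = p ^ m)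
    (f : K →ₗ[F] K) (hf : f ≠ 0) (hf2 : f ∘ₗ f = 0)
    (χ : K →+ F) (hχ : χ ≠ 0) (hχf : ∀ x : K, χ (f x) = 0) :
    (∀ x : K, (fun z : K => x + (z - χ x • f z))^[p] =
        fun y : K => (p * (p - 1) / 2) • (χ x • f x) + y) ∧
    (p = 2 → ∀ x : K, (fun z : K => x + (z - χ x • f z))^[2] =
        fun y : K => χ x • f x + y) :=
  stmt10_general p m F K hK f hf2 χ
end

section
/- Let K be a finite field of characteristic 2. There is no pair (χ, f) with f : K → K a nonzero additive map and χ : K → K a nonzero additive map such that χ(x)·f(x) = 0 for all x ∈ K and ker(χ) a proper additive subgroup of K of index 2. More precisely: if f : K → K is additive and χ : K → F is a nonzero additive map to a subfield F such that χ(x)f(x) = 0 for all x ∈ K, then f = 0. -/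
/-- If `χ a ≠ 0`, every `x` with `χ x = 0` is `(x + a) - a` with `χ (x + a) ≠ 0`,
so the complement of `ker χ` already determines an additive map. -/
theorem AddMonoidHom.eq_zero_of_eq_zero_off_ker {M N G : Type*} [AddZeroClass M]
    [AddZeroClass N] [AddZeroClass G] (χ : M →+ G) (hχ : χ ≠ 0) (f : M →+ N)
    (h : ∀ x, χ x ≠ 0 → f x = 0) : f = 0 := by
  obtain ⟨a, ha⟩ : ∃ a, χ a ≠ 0 := by
    by_contra! hχ0
    exact hχ (AddMonoidHom.ext hχ0)
  ext x
  by_cases hx : χ x = 0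
  · have hxa : f (x + a) = 0 := h _ (by rwa [map_add, hx, zero_add])
    rwa [map_add, h a ha, add_zero] at hxa
  · exact h x hx

theorem stmt11_general (F K : Type*) [Field F] [Field K] [Algebra F K]
    (f : K →+ K) (χ : K →+ F) (hχ : χ ≠ 0)
    (h : ∀ x : K, χ x • f x = (0 : K)) : f = 0 :=
  χ.eq_zero_of_eq_zero_off_ker hχ f fun x hx => (smul_eq_zero.mp (h x)).resolve_left hx

/-- Let `K` be a finite field of characteristic 2 and `F` a subfield.
If `f : K → K` is additive and `χ : K → F` is a nonzero additive map such that
`χ(x)·f(x) = 0` for all `x ∈ K`, then `f = 0`. (In particular there is no pair `(χ, f)`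
with both nonzero and `χ(x)·f(x) = 0` for all `x`.) -/
theorem stmt11 (F K : Type*) [Field F] [Field K] [Algebra F K] [Fintype K]
    (h2 : CharP K 2) (f : K →+ K) (χ : K →+ F) (hχ : χ ≠ 0)
    (h : ∀ x : K, χ x • f x = (0 : K)) : f = 0 :=
  stmt11_general F K f χ hχ h
end

section
/- Let K = F_{p^m} with p a prime, and suppose α : K → GL(K_K) = K* (identified with scalar multiplications, i.e., the group of K-linear automorphisms of K) is a map satisfying the cocycle condition α(x+y) = α(α(y)(x))·α(y) for all x, y ∈ K. Then α(x) = 1 for all x ∈ K. -/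
/-!
For a cocycle `α`, the twisted product `x ⋆ y = α(y)⁻¹ x + y` is a group law on `K` for which
`α` is a homomorphism to `Kˣ`. This group has order `|K|`, while `Kˣ` has order `|K| - 1`; the
orders are coprime, so the homomorphism is trivial.
-/

theorem MonoidHom.apply_eq_one_of_coprime_natCard {G H : Type*} [Group G] [Group H] (f : G →* H)
    (hGH : (Nat.card G).Coprime (Nat.card H)) (g : G) : f g = 1 :=
  orderOf_eq_one_iff.mp <| Nat.eq_one_of_dvd_coprimes hGH
    ((orderOf_map_dvd f g).trans (orderOf_dvd_natCard g)) (orderOf_dvd_natCard (f g))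

section Twisted

variable {K : Type*} [DivisionRing K] {α : K → Kˣ}

def IsScalarCocycle (α : K → Kˣ) : Prop :=
  ∀ x y : K, α (x + y) = α (α y * x) * α y

def twistedMul (α : K → Kˣ) (x y : K) : K :=
  (α y : K)⁻¹ * x + y

def twistedInv (α : K → Kˣ) (x : K) : K :=
  -(α x * x)

namespace IsScalarCocycle

variable (hα : IsScalarCocycle α)
include hα

theorem map_zero : α 0 = 1 := by
  simpa using hα 0 0

theorem map_twistedMul (x y : K) : α (twistedMul α x y) = α x * α y := by
  simpa only [twistedMul, mul_inv_cancel_left₀ (α y).ne_zero] using hα ((α y : K)⁻¹ * x) y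

theorem twistedMul_assoc (x y z : K) :
    twistedMul α (twistedMul α x y) z = twistedMul α x (twistedMul α y z) := by
  rw [twistedMul.eq_1 α x (twistedMul α y z), hα.map_twistedMul]
  simp only [twistedMul, Units.val_mul, mul_inv_rev, mul_add, mul_assoc, add_assoc]

theorem twistedMul_zero (x : K) : twistedMul α x 0 = x := by
  simp [twistedMul, hα.map_zero]

end IsScalarCocycle

theorem zero_twistedMul (x : K) : twistedMul α 0 x = x := by
  simp [twistedMul]

theorem twistedInv_twistedMul (x : K) : twistedMul α (twistedInv α x) x = 0 := by
  rw [twistedMul, twistedInv, mul_neg, inv_mul_cancel_left₀ (α x).ne_zero, neg_add_cancel]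

@[nolint unusedArguments]
def Twisted (α : K → Kˣ) (_ : IsScalarCocycle α) : Type _ := K

variable (hα : IsScalarCocycle α)

instance : Group (Twisted α hα) where
  mul x y := twistedMul (K := K) α x y
  one := show K from 0
  inv x := twistedInv (K := K) α x
  mul_assoc := hα.twistedMul_assoc
  one_mul := zero_twistedMul (K := K)
  mul_one := hα.twistedMul_zero
  inv_mul_cancel := twistedInv_twistedMul (K := K)

def IsScalarCocycle.toTwistedHom : Twisted α hα →* Kˣ where
  toFun := α
  map_one' := hα.map_zero
  map_mul' := fun x y => hα.map_twistedMul x y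

end Twisted

theorem stmt14_general (K : Type*) [Field K] [Fintype K] (α : K → Kˣ)
    (h : ∀ x y : K, α (x + y) = α ((α y : K) * x) * α y) :
    ∀ x : K, α x = 1 := by
  have hα : IsScalarCocycle α := h
  have hcard : (Nat.card K).Coprime (Nat.card Kˣ) := by
    rw [Nat.card_units, Nat.coprime_self_sub_right Nat.card_pos]
    exact Nat.coprime_one_right _
  exact hα.toTwistedHom.apply_eq_one_of_coprime_natCard hcard

/-- For `K = F_{p^m}`, if `α : K → K*` (identifying `GL(K_K)` with `K*`
acting by scalar multiplication) satisfies the cocycle condition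
`α(x+y) = α(α(y)(x)) · α(y)` for all `x, y ∈ K`, then `α(x) = 1` for all `x`. -/
theorem stmt14 (p m : ℕ) (hp : p.Prime) (K : Type*) [Field K] [Fintype K]
    (hK : Fintype.card K = p ^ m) (α : K → Kˣ)
    (h : ∀ x y : K, α (x + y) = α ((α y : K) * x) * α y) :
    ∀ x : K, α x = 1 :=
  stmt14_general K α h
end

section
/- Let K = F_{2^m}, F = F_{2^a} with a | m and m > a, and suppose χ : K → F is F-linear and nonzero, f : K → K is F-linear and nonzero with f² = 0, χ∘f = 0, and ker(χ) = ker(f). Then the abelian group I_{χ,f} is isomorphic to the direct product of m - 2a copies of Z/2 and a copies of Z/4. -/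
private def zmodCongr {m k : ℕ} (h : m = k) : ZMod m ≃+ ZMod k := by subst h; exact AddEquiv.refl _

private def torProd {B C : Type*} [AddMonoid B] [AddMonoid C] :
    {y : B × C // y + y = 0} ≃ {b : B // b + b = 0} × {c : C // c + c = 0} where
  toFun y := (⟨y.1.1, congrArg Prod.fst y.2⟩, ⟨y.1.2, congrArg Prod.snd y.2⟩)
  invFun bc := ⟨(bc.1.1, bc.2.1), Prod.ext bc.1.2 bc.2.2⟩
  left_inv y := rfl
  right_inv bc := rfl

private def torPi {ι : Type*} {B : Type*} [AddMonoid B] :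
    {y : ι → B // y + y = 0} ≃ (ι → {b : B // b + b = 0}) :=
  (Equiv.subtypeEquivRight (fun y => by simp [funext_iff])).trans Equiv.subtypePiEquivPi

private lemma lemA {A : Type*} [AddCommGroup A] [Finite A] {m a : ℕ}
    (ham : a < m) (h2a : 2 * a ≤ m)
    (hcard : Nat.card A = 2 ^ m)
    (h4 : ∀ x : A, x + x + x + x = 0)
    (ht : Nat.card {x : A // x + x = 0} = 2 ^ (m - a)) :
    Nonempty (A ≃+ ((Fin (m - 2 * a) → ZMod 2) × (Fin a → ZMod 4))) := by
  classical
  obtain ⟨ι, hι, n, hn1, ⟨e⟩⟩ := AddCommGroup.equiv_directSum_zmod_of_finite' A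
  let e1 : A ≃+ ∀ i, ZMod (n i) := e.trans (DirectSum.addEquivProd _)
  have hdvd : ∀ i, n i ∣ 4 := by
    intro i
    have h := congrArg e1 (h4 (e1.symm (fun j => 1)))
    simp only [map_add, map_zero, AddEquiv.apply_symm_apply] at h
    have h3 : (1 : ZMod (n i)) + 1 + 1 + 1 = 0 := congrFun h i
    have h4' : ((4 : ℕ) : ZMod (n i)) = 0 := by push_cast; linear_combination h3
    exact (ZMod.natCast_eq_zero_iff _ _).mp h4'
  have hn24 : ∀ i, n i = 2 ∨ n i = 4 := by
    intro i
    have h1 := hn1 i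
    have h2 := hdvd i
    have h3 : n i ≤ 4 := Nat.le_of_dvd (by norm_num) h2
    interval_cases h : n i
    · exact Or.inl rfl
    · exfalso; revert h2; decide
    · exact Or.inr rfl
  let p : ι → Prop := fun i => n i = 2
  let e2 : (∀ i, ZMod (n i)) ≃+ (∀ i : {i // p i}, ZMod (n i.1)) × (∀ i : {i // ¬ p i}, ZMod (n i.1)) :=
    AddEquiv.mk' (Equiv.piEquivPiSubtypeProd p _) (fun x y => rfl)
  let e3 : (∀ i : {i // p i}, ZMod (n i.1)) ≃+ ({i // p i} → ZMod 2) :=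
    AddEquiv.piCongrRight (fun i => zmodCongr i.2)
  let e4 : (∀ i : {i // ¬ p i}, ZMod (n i.1)) ≃+ ({i // ¬ p i} → ZMod 4) :=
    AddEquiv.piCongrRight (fun i => zmodCongr ((hn24 i.1).resolve_left i.2))
  let E : A ≃+ (({i // p i} → ZMod 2) × ({i // ¬ p i} → ZMod 4)) :=
    e1.trans (e2.trans (AddEquiv.prodCongr e3 e4))
  set c2 := Nat.card {i // p i} with hc2def
  set c4 := Nat.card {i // ¬ p i} with hc4def
  have hA : 2 ^ c2 * 4 ^ c4 = 2 ^ m := by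
    rw [← hcard, Nat.card_congr E.toEquiv, Nat.card_prod, Nat.card_fun, Nat.card_fun,
      Nat.card_zmod, Nat.card_zmod]
  have htor2 : Nat.card {b : ZMod 2 // b + b = 0} = 2 := by
    rw [Nat.card_eq_fintype_card]; decide
  have htor4 : Nat.card {b : ZMod 4 // b + b = 0} = 2 := by
    rw [Nat.card_eq_fintype_card]; decide
  have hT : 2 ^ c2 * 2 ^ c4 = 2 ^ (m - a) := by
    rw [← ht]
    have eT : {x : A // x + x = 0} ≃
        ({i // p i} → {b : ZMod 2 // b + b = 0}) × ({i // ¬ p i} → {b : ZMod 4 // b + b = 0}) :=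
      (E.toEquiv.subtypeEquiv (fun x => by
        show x + x = 0 ↔ E x + E x = 0
        constructor
        · intro h; rw [← map_add, h, map_zero]
        · intro h; exact E.injective (by rwa [map_add, map_zero]))).trans
        (torProd.trans (Equiv.prodCongr torPi torPi))
    rw [Nat.card_congr eT, Nat.card_prod, Nat.card_fun, Nat.card_fun, htor2, htor4]
  have hm : c2 + 2 * c4 = m := by
    refine Nat.pow_right_injective (le_refl 2) (?_ : (2:ℕ) ^ (c2 + 2*c4) = 2 ^ m)
    rw [← hA, pow_add, pow_mul]; norm_num
  have hma' : c2 + c4 = m - a := by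
    refine Nat.pow_right_injective (le_refl 2) (?_ : (2:ℕ) ^ (c2 + c4) = 2 ^ (m - a))
    rw [← hT, pow_add]
  have hc4 : c4 = a := by omega
  have hc2 : c2 = m - 2 * a := by omega
  have f2 : {i // p i} ≃ Fin (m - 2 * a) :=
    Fintype.equivFinOfCardEq (by rw [← Nat.card_eq_fintype_card, ← hc2def, hc2])
  have f4 : {i // ¬ p i} ≃ Fin a :=
    Fintype.equivFinOfCardEq (by rw [← Nat.card_eq_fintype_card, ← hc4def, hc4])
  exact ⟨E.trans (AddEquiv.prodCongr
    (AddEquiv.mk' (Equiv.arrowCongr f2 (Equiv.refl _)) (fun x y => rfl))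
    (AddEquiv.mk' (Equiv.arrowCongr f4 (Equiv.refl _)) (fun x y => rfl)))⟩



/-- Let `K = F_{2^m}`, `F = F_{2^a}` with `a ∣ m`, `m > a`, and let
`χ : K → F` be `F`-linear and nonzero, `f : K → K` be `F`-linear and nonzero with
`f² = 0`, `χ ∘ f = 0` and `ker χ = ker f`. Then the abelian group
`I_{χ,f} = {(x, 1-χ(x)f) : x ∈ K}` (realized in `Perm K` as the subgroup consisting of
the permutations `z ↦ x + z - χ(x)·f(z)`) is isomorphic to the direct product of
`m - 2a` copies of `ℤ/2` and `a` copies of `ℤ/4`. -/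
theorem stmt18 (m a : ℕ) (ha : 0 < a) (ham : a ∣ m) (hma : a < m)
    (F K : Type*) [Field F] [Field K] [Algebra F K] [Fintype F] [Fintype K]
    (hF : Fintype.card F = 2 ^ a) (hK : Fintype.card K = 2 ^ m)
    (f : K →ₗ[F] K) (hf : f ≠ 0) (hf2 : f ∘ₗ f = 0)
    (χ : K →ₗ[F] F) (hχ : χ ≠ 0) (hχf : ∀ x : K, χ (f x) = 0)
    (hker : ∀ x : K, χ x = 0 ↔ f x = 0) :
    ∃ S : Subgroup (Equiv.Perm K),
      (S : Set (Equiv.Perm K)) =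
        {σ : Equiv.Perm K | ∃ x : K, (σ : K → K) = fun z : K => x + (z - χ x • f z)} ∧
      Nonempty (S ≃* Multiplicative ((Fin (m - 2 * a) → ZMod 2) × (Fin a → ZMod 4))) := by
  classical
  have hK2 : (2 : K) = 0 := by
    have h := FiniteField.cast_card_eq_zero K
    rw [hK] at h
    push_cast at h
    exact (pow_eq_zero_iff (by omega)).mp h
  have hadd : ∀ z : K, z + z = 0 := fun z => by
    rw [← two_mul, hK2, zero_mul]
  have hneg : ∀ z : K, -z = z := fun z => neg_eq_of_add_eq_zero_left (hadd z)
  obtain ⟨y₀, hy₀⟩ : ∃ y, χ y ≠ 0 := by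
    by_contra h
    push_neg at h
    exact hχ (LinearMap.ext fun x => h x)
  set x₀ : K := (χ y₀)⁻¹ • y₀ with hx₀def
  have hx₀ : χ x₀ = 1 := by
    rw [hx₀def, map_smul, smul_eq_mul, inv_mul_cancel₀ hy₀]
  set v : K := f x₀ with hvdef
  have hχv : χ v = 0 := hχf x₀
  have hfv : ∀ z, f z = χ z • v := by
    intro z
    have hker' : χ (z - χ z • x₀) = 0 := by
      rw [map_sub, map_smul, hx₀, smul_eq_mul, mul_one, sub_self]
    have h2 := (hker _).mp hker'
    rw [map_sub, map_smul] at h2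
    exact sub_eq_zero.mp h2
  have hv0 : v ≠ 0 := by
    intro h
    apply hf
    ext z
    rw [LinearMap.zero_apply, hfv z, h, smul_zero]
  have hff : ∀ z, f (f z) = 0 := fun z => by
    simpa using LinearMap.ext_iff.mp hf2 z
  have hcomp : ∀ x y z : K,
      x + ((y + (z - χ y • f z)) - χ x • f (y + (z - χ y • f z)))
        = (x + y - χ x • f y) + (z - χ (x + y - χ x • f y) • f z) := by
    intro x y z
    simp only [map_add, map_sub, map_smul, hff, hχf, smul_zero, sub_zero, smul_eq_mul,
      mul_zero, add_smul, sub_smul, smul_sub, smul_add]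
    abel
  have h0fun : ∀ z : K, (0:K) + (z - χ 0 • f z) = z := by
    intro z; rw [map_zero, zero_smul, sub_zero, zero_add]
  -- inverse witnesses
  have hopinv : ∀ x : K, x + (x + χ x • f x) - χ x • f (x + χ x • f x) = 0 := by
    intro x
    rw [map_add, map_smul, hff, smul_zero, add_zero]
    have h1 : x + (x + χ x • f x) - χ x • f x = x + x := by abel
    rw [h1]; exact hadd x
  have hopinv' : ∀ x : K, (x + χ x • f x) + x - χ (x + χ x • f x) • f x = 0 := by
    intro x
    rw [map_add, map_smul, hχf, smul_zero, add_zero]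
    have h1 : (x + χ x • f x) + x - χ x • f x = x + x := by abel
    rw [h1]; exact hadd x
  -- the permutations
  let π : K → Equiv.Perm K := fun x =>
    { toFun := fun z : K => x + (z - χ x • f z)
      invFun := fun z : K => (x + χ x • f x) + (z - χ (x + χ x • f x) • f z)
      left_inv := by
        intro z
        show (x + χ x • f x) + ((x + (z - χ x • f z)) - χ (x + χ x • f x) • f (x + (z - χ x • f z))) = z
        rw [hcomp (x + χ x • f x) x z, hopinv', h0fun]
      right_inv := by
        intro z
        show x + (((x + χ x • f x) + (z - χ (x + χ x • f x) • f z)) - χ x • f ((x + χ x • f x) + (z - χ (x + χ x • f x) • f z))) = z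
        rw [hcomp x (x + χ x • f x) z, hopinv, h0fun] }
  have hπcoe : ∀ x : K, (π x : K → K) = fun z : K => x + (z - χ x • f z) := fun x => rfl
  have hmulπ : ∀ x y : K, π x * π y = π (x + y - χ x • f y) :=
    fun x y => Equiv.ext fun z => hcomp x y z
  have hπ0 : π 0 = 1 := Equiv.ext fun z => h0fun z
  have hπinj : Function.Injective π := by
    intro x y h
    have h2 : (π x) 0 = (π y) 0 := by rw [h]
    have h3 : x + ((0:K) - χ x • f 0) = y + ((0:K) - χ y • f 0) := h2
    simpa [map_zero] using h3
  -- the subgroup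
  let S : Subgroup (Equiv.Perm K) :=
    { carrier := {σ : Equiv.Perm K | ∃ x : K, (σ : K → K) = fun z : K => x + (z - χ x • f z)}
      mul_mem' := by
        rintro σ τ ⟨x, hx⟩ ⟨y, hy⟩
        refine ⟨x + y - χ x • f y, ?_⟩
        funext z
        show σ (τ z) = _
        rw [hx, hy]
        exact hcomp x y z
      one_mem' := ⟨0, funext fun z => (h0fun z).symm⟩
      inv_mem' := by
        rintro σ ⟨x, hx⟩
        have hσ : σ = π x := Equiv.coe_fn_injective hx
        refine ⟨x + χ x • f x, ?_⟩
        rw [hσ]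
        rfl }
  -- K ≃ S
  let toS : K → S := fun x => ⟨π x, x, rfl⟩
  have htoS_bij : Function.Bijective toS := by
    constructor
    · intro x y h
      exact hπinj (congrArg Subtype.val h)
    · rintro ⟨σ, x, hx⟩
      exact ⟨x, Subtype.ext (Equiv.coe_fn_injective hx).symm⟩
  let e : K ≃ S := Equiv.ofBijective toS htoS_bij
  have hmulS : ∀ x y : K, e x * e y = e (x + y - χ x • f y) := by
    intro x y; exact Subtype.ext (hmulπ x y)
  have he0 : e 0 = 1 := Subtype.ext hπ0
  have hopxx : ∀ x : K, x + x - χ x • f x = (χ x * χ x) • v := by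
    intro x
    rw [hadd x, zero_sub, hneg, hfv x, smul_smul]
  have hsq : ∀ x : K, e x * e x = e ((χ x * χ x) • v) := by
    intro x; rw [hmulS, hopxx]
  have hsq1 : ∀ x : K, (e x * e x = 1) ↔ χ x = 0 := by
    intro x
    rw [hsq, ← he0, e.apply_eq_iff_eq]
    constructor
    · intro h
      exact mul_self_eq_zero.mp ((smul_eq_zero.mp h).resolve_right hv0)
    · intro h; rw [h, zero_mul, zero_smul]
  have hopcomm : ∀ x y : K, x + y - χ x • f y = y + x - χ y • f x := by
    intro x y
    rw [hfv y, hfv x, smul_smul, smul_smul, mul_comm (χ x) (χ y), add_comm x y]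
  letI : CommGroup S :=
    { (inferInstance : Group S) with
      mul_comm := by
        intro s t
        obtain ⟨x, rfl⟩ := e.surjective s
        obtain ⟨y, rfl⟩ := e.surjective t
        rw [hmulS, hmulS, hopcomm] }
  have h4S : ∀ s : S, s * s * s * s = 1 := by
    intro s
    obtain ⟨x, rfl⟩ := e.surjective s
    rw [mul_assoc (e x * e x) (e x) (e x), hsq]
    rw [hsq ((χ x * χ x) • v)]
    have hw : χ ((χ x * χ x) • v) = 0 := by rw [map_smul, hχv, smul_zero]
    rw [hw, zero_mul, zero_smul, he0]
  haveI : Finite S := inferInstance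
  have hcardS : Nat.card S = 2 ^ m := by
    rw [← Nat.card_congr e, Nat.card_eq_fintype_card, hK]
  have hFcard : Nat.card F = 2 ^ a := by rw [Nat.card_eq_fintype_card, hF]
  let eker : K ≃ F × {x : K // χ x = 0} :=
    { toFun := fun x => (χ x, ⟨x - χ x • x₀, by
        rw [map_sub, map_smul, hx₀, smul_eq_mul, mul_one, sub_self]⟩)
      invFun := fun cw => cw.1 • x₀ + cw.2.1
      left_inv := fun x => by
        show χ x • x₀ + (x - χ x • x₀) = x
        abel
      right_inv := fun cw => by
        have hc : χ (cw.1 • x₀ + cw.2.1) = cw.1 := by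
          rw [map_add, map_smul, hx₀, smul_eq_mul, mul_one, cw.2.2, add_zero]
        refine Prod.ext hc (Subtype.ext ?_)
        show (cw.1 • x₀ + cw.2.1) - χ (cw.1 • x₀ + cw.2.1) • x₀ = cw.2.1
        rw [hc]
        abel }
  have hkercard : Nat.card {x : K // χ x = 0} = 2 ^ (m - a) := by
    have h1 : (2:ℕ) ^ m = 2 ^ a * Nat.card {x : K // χ x = 0} := by
      rw [← hFcard, ← Nat.card_prod, ← Nat.card_congr eker, Nat.card_eq_fintype_card, hK]
    have h2 : (2:ℕ) ^ a * 2 ^ (m - a) = 2 ^ a * Nat.card {x : K // χ x = 0} := by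
      rw [← pow_add, show a + (m - a) = m by omega]
      exact h1
    exact (Nat.eq_of_mul_eq_mul_left (by positivity) h2).symm
  have htorS : Nat.card {s : S // s * s = 1} = 2 ^ (m - a) := by
    rw [← hkercard]
    exact (Nat.card_congr (e.subtypeEquiv (fun x => (hsq1 x).symm))).symm
  have h2a : 2 * a ≤ m := by
    obtain ⟨k, hk⟩ := ham
    rcases Nat.lt_or_ge k 2 with h | h
    · interval_cases k <;> omega
    · calc 2 * a = a * 2 := by ring
        _ ≤ a * k := Nat.mul_le_mul_left a h
        _ = m := hk.symm
  haveI : Finite (Additive S) := Finite.of_equiv S Additive.ofMul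
  have hcardA : Nat.card (Additive S) = 2 ^ m :=
    (Nat.card_congr (Additive.ofMul (α := S)).symm).trans hcardS
  have h4A : ∀ x : Additive S, x + x + x + x = 0 := fun x => h4S x.toMul
  have htorA : Nat.card {x : Additive S // x + x = 0} = 2 ^ (m - a) := by
    rw [← htorS]
    exact Nat.card_congr (Equiv.subtypeEquiv (Additive.toMul (α := S)) (fun x => Iff.rfl))
  obtain ⟨E⟩ := lemA (A := Additive S) hma h2a hcardA h4A htorA
  exact ⟨S, rfl, ⟨(MulEquiv.multiplicativeAdditive S).symm.trans (AddEquiv.toMultiplicative E)⟩⟩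
end

section
/- Let K = F_{p^m}, F = F_{p^a}, and let χ : K → F be a nonzero F-linear form. Then for every positive integer u with 2u ≤ m/a - 1 there exists an F-linear map f : K → K of rank u satisfying f ≠ 0, f² = 0, χ∘f = 0, and ker(f) ⊄ ker(χ); equivalently, there exist such pairs (χ, f) yielding a non-abelian group I_{χ,f}. -/
/-- Let `K = F_{p^m}`, `F = F_{p^a}` with `a ∣ m`, and let `χ : K → F` be a
nonzero `F`-linear form. For every positive integer `u` with `2u ≤ m/a - 1`, there exists
an `F`-linear map `f : K → K` of rank `u` with `f ≠ 0`, `f² = 0`, `χ ∘ f = 0`, and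
`ker f ⊄ ker χ`; in particular the resulting group `I_{χ,f}` (whose element determined by
`x` is the map `z ↦ x + z - χ(x)·f(z)`) is non-abelian. -/
theorem stmt19 (p m a : ℕ) (hp : p.Prime) (ha : 0 < a) (ham : a ∣ m)
    (F K : Type*) [Field F] [Field K] [Algebra F K] [Fintype F] [Fintype K]
    (hF : Fintype.card F = p ^ a) (hK : Fintype.card K = p ^ m)
    (χ : K →ₗ[F] F) (hχ : χ ≠ 0)
    (u : ℕ) (hu : 0 < u) (h2u : 2 * u ≤ m / a - 1) :
    ∃ f : K →ₗ[F] K,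
      f ≠ 0 ∧ f ∘ₗ f = 0 ∧ (∀ x : K, χ (f x) = 0) ∧
      Module.finrank F (LinearMap.range f) = u ∧
      (∃ x : K, f x = 0 ∧ χ x ≠ 0) ∧
      ¬ ∀ x y : K,
        (fun z : K => x + (z - χ x • f z)) ∘ (fun z : K => y + (z - χ y • f z)) =
          (fun z : K => y + (z - χ y • f z)) ∘ (fun z : K => x + (z - χ x • f z)) := by
  classical
  -- dimension bookkeeping
  set d := Module.finrank F K with hd
  have hcard : Fintype.card K = Fintype.card F ^ d := Module.card_eq_pow_finrank
  rw [hK, hF, ← pow_mul] at hcard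
  have hm : m = a * d := Nat.pow_right_injective hp.two_le hcard
  have hdiv : m / a = d := by rw [hm, Nat.mul_div_cancel_left _ ha]
  rw [hdiv] at h2u
  -- x₀ with χ x₀ ≠ 0
  obtain ⟨x₀, hx₀⟩ : ∃ x : K, χ x ≠ 0 := by
    by_contra h
    push_neg at h
    exact hχ (LinearMap.ext fun x => h x)
  set N := LinearMap.ker χ with hN
  -- range of χ is ⊤
  have hrange : LinearMap.range χ = ⊤ := by
    rw [eq_top_iff]
    intro c _
    exact ⟨(c / χ x₀) • x₀, by simp [div_mul_cancel₀ c hx₀]⟩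
  have hrk : d = Module.finrank F N + 1 := by
    have h1 := LinearMap.finrank_range_add_finrank_ker χ
    rw [hrange, finrank_top, Module.finrank_self] at h1
    rw [hN]
    omega
  set e := Module.finrank F N with he
  have h2ue : 2 * u ≤ e := by omega
  -- basis of N
  let b : Module.Basis (Fin e) F N := Module.finBasis F N
  -- the projection π : K → N along x₀
  let q : K →ₗ[F] K := LinearMap.id - (χ x₀)⁻¹ • LinearMap.smulRight χ x₀
  have hq : ∀ v : K, q v = v - ((χ x₀)⁻¹ * χ v) • x₀ := by
    intro v; simp [q, mul_smul]
  have hqmem : ∀ v : K, q v ∈ N := by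
    intro v
    rw [hN, LinearMap.mem_ker, hq, map_sub, map_smul, smul_eq_mul]
    field_simp
    simp
  let π : K →ₗ[F] N := q.codRestrict N hqmem
  have hπ : ∀ n : N, π (n : K) = n := by
    intro n
    have hn : χ (n : K) = 0 := n.2
    apply Subtype.ext
    show q (n : K) = (n : K)
    rw [hq, hn]; simp
  have hπx₀ : π x₀ = 0 := by
    apply Subtype.ext
    show q x₀ = (0 : K)
    rw [hq]
    field_simp
    simp
  -- the nilpotent map g on N
  let c : Fin e → N := fun j => if h : u ≤ j.val ∧ j.val < 2 * u then b ⟨j.val - u, by omega⟩ else 0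
  let g : N →ₗ[F] N := b.constr F c
  have hgb : ∀ j, g (b j) = c j := fun j => b.constr_basis F c j
  have hgg : ∀ n : N, g (g n) = 0 := by
    have hbasis : ∀ j, g (g (b j)) = 0 := by
      intro j
      rw [hgb]
      by_cases h : u ≤ j.val ∧ j.val < 2 * u
      · have hcj : c j = b ⟨j.val - u, by omega⟩ := dif_pos h
        rw [hcj, hgb]
        exact dif_neg (by simp only [Fin.val_mk]; omega)
      · have hcj : c j = 0 := dif_neg h
        rw [hcj, map_zero]
    have h0 : g ∘ₗ g = 0 := b.ext fun j => by simpa using hbasis j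
    intro n
    simpa using LinearMap.congr_fun h0 n
  -- the map f
  let f : K →ₗ[F] K := N.subtype ∘ₗ g ∘ₗ π
  have hf : ∀ v : K, f v = (g (π v) : K) := fun v => rfl
  have hfN : ∀ v : K, χ (f v) = 0 := fun v => (g (π v)).2
  have hπf : ∀ v : K, π (f v) = g (π v) := fun v => hπ _
  -- key vectors
  have h1e : ∀ i : Fin u, (i : ℕ) < e := fun i => by omega
  have hue : ∀ i : Fin u, u + (i : ℕ) < e := fun i => by omega
  have hcu : ∀ i : Fin u, c ⟨u + i, hue i⟩ = b ⟨i, h1e i⟩ := by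
    intro i
    have h1 : c ⟨u + (i : ℕ), hue i⟩ = b ⟨(u + (i : ℕ)) - u, by omega⟩ :=
      dif_pos ⟨by simp only [Fin.val_mk]; omega, by simp only [Fin.val_mk]; omega⟩
    rw [h1]
    congr 1
    exact Fin.ext (by simp only [Fin.val_mk]; omega)
  have hfw : ∀ i : Fin u, f (b ⟨u + i, hue i⟩ : K) = (b ⟨i, h1e i⟩ : K) := by
    intro i
    rw [hf, hπ, hgb, hcu]
  have hfx₀ : f x₀ = 0 := by rw [hf, hπx₀, map_zero]; rfl
  refine ⟨f, ?_, ?_, hfN, ?_, ⟨x₀, hfx₀, hx₀⟩, ?_⟩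
  · -- f ≠ 0
    intro h0
    have i0 : Fin u := ⟨0, hu⟩
    have hw := hfw i0
    rw [h0] at hw
    have hb0 : (b ⟨(i0 : ℕ), h1e i0⟩ : N) ≠ 0 := b.ne_zero _
    exact hb0 (Subtype.ext (by simpa using hw.symm))
  · -- f ∘ f = 0
    apply LinearMap.ext
    intro v
    simp only [LinearMap.comp_apply, LinearMap.zero_apply]
    rw [hf, hπf, hgg, ZeroMemClass.coe_zero]
  · -- rank f = u
    have hrgeq : LinearMap.range (g ∘ₗ π) = LinearMap.range g := by
      apply le_antisymm
      · exact LinearMap.range_comp_le_range π g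
      · rintro _ ⟨n, rfl⟩
        exact ⟨(n : K), by rw [LinearMap.comp_apply, hπ]⟩
    have hrf : LinearMap.range f = (LinearMap.range g).map N.subtype := by
      show LinearMap.range (N.subtype ∘ₗ (g ∘ₗ π)) = _
      rw [LinearMap.range_comp, hrgeq]
    rw [hrf, (Submodule.equivMapOfInjective N.subtype N.injective_subtype
      (LinearMap.range g)).symm.finrank_eq]
    -- range g = span of first u basis vectors
    let v : Fin u → N := fun i => b ⟨i, h1e i⟩
    have hrangec : Set.range c = insert 0 (Set.range v) := by
      apply Set.eq_of_subset_of_subset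
      · rintro x ⟨j, rfl⟩
        by_cases h : u ≤ j.val ∧ j.val < 2 * u
        · have hcj : c j = b ⟨j.val - u, by omega⟩ := dif_pos h
          exact Set.mem_insert_of_mem _ ⟨⟨j.val - u, by omega⟩, by rw [hcj]⟩
        · have hcj : c j = 0 := dif_neg h
          rw [hcj]
          exact Set.mem_insert _ _
      · rintro x (rfl | ⟨i, rfl⟩)
        · exact ⟨⟨0, by omega⟩, dif_neg (by simp only [Fin.val_mk]; omega)⟩
        · exact ⟨⟨u + i, hue i⟩, hcu i⟩
    have hli : LinearIndependent F v := by
      apply b.linearIndependent.comp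
      intro i j hij
      have hval : (i : ℕ) = j := by
        have := congrArg (Fin.val) hij
        simpa using this
      exact Fin.ext hval
    rw [show LinearMap.range g = Submodule.span F (Set.range v) by
      rw [show g = b.constr F c from rfl, Module.Basis.constr_range, hrangec,
        Submodule.span_insert_zero]]
    rw [finrank_span_eq_card hli, Fintype.card_fin]
  · -- non-abelian
    intro hab
    set w : K := (b ⟨u + 0, hue ⟨0, hu⟩⟩ : K) with hw
    have hχw : χ w = 0 := (b _).2
    have hfw0 : f w = (b ⟨0, h1e ⟨0, hu⟩⟩ : K) := hfw ⟨0, hu⟩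
    have heq := congrFun (hab x₀ w) 0
    simp only [Function.comp_apply, map_zero, smul_zero, sub_zero, add_zero] at heq
    rw [hfx₀, hχw, hfw0] at heq
    simp only [smul_zero, sub_zero, zero_smul] at heq
    -- heq : x₀ + (w - χ x₀ • b0) = w + x₀
    rw [← add_sub_assoc, add_comm w x₀] at heq
    have hb0 : (χ x₀) • (b ⟨0, h1e ⟨0, hu⟩⟩ : K) = 0 := sub_eq_self.mp heq
    rcases smul_eq_zero.mp hb0 with h | h
    · exact hx₀ h
    · exact b.ne_zero _ (Subtype.ext (by simpa using h))
end
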